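/- arXiv:2605.22006 — 3 statements merged into one kernel-verified Lean document; each statement's English description precedes it below -/
import Mathlib

section
/- Let 0 < γ < β < 1 and let f : ℝ^d → ℝ^m be bounded and continuous with [f]_{C^γ} < ∞. Then there exists a constant C depending only on β, γ and d such that for every t > 0: [G_t * f]_{C^β} ≤ C t^{−(β−γ)/2} [f]_{C^γ}. -/
open MeasureTheory Set
open scoped ENNReal

noncomputable def heatKernel (d : ℕ) (s : ℝ) (y : (EuclideanSpace ℝ (Fin d))) : ℝ :=
  (4 * Real.pi * s) ^ (-(d : ℝ) / 2) * Real.exp (-(‖y‖ ^ 2) / (4 * s))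

section Aux

lemma aux_exp_int (d : ℕ) {b : ℝ} (hb : 0 < b) :
    Integrable (fun v : EuclideanSpace ℝ (Fin d) => Real.exp (-b * ‖v‖ ^ 2)) := by
  have h := (GaussianFourier.integrable_cexp_neg_mul_sq_norm_add
    (V := EuclideanSpace ℝ (Fin d)) (b := (b : ℂ)) (by simpa using hb) 0 0).norm
  convert h using 2 with v
  simp [Complex.norm_exp, ← Complex.ofReal_pow]

lemma aux_exp_diff (a b : ℝ) :
    |Real.exp (-a) - Real.exp (-b)| ≤ |a - b| * (Real.exp (-a) + Real.exp (-b)) := by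
  have key : ∀ p q : ℝ, Real.exp (-p) - Real.exp (-q) ≤ |p - q| * Real.exp (-p) := by
    intro p q
    rcases le_or_gt p q with h | h
    · have h1 : (p - q) + 1 ≤ Real.exp (p - q) := Real.add_one_le_exp _
      have h2 : Real.exp (-q) = Real.exp (-p) * Real.exp (p - q) := by
        rw [← Real.exp_add]; ring_nf
      have h4 : |p - q| = q - p := by rw [abs_sub_comm]; exact abs_of_nonneg (by linarith)
      nlinarith [Real.exp_pos (-p)]
    · have h2 : Real.exp (-p) - Real.exp (-q) ≤ 0 := by
        have := Real.exp_le_exp.mpr (neg_le_neg h.le)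
        linarith
      have := abs_nonneg (p - q)
      nlinarith [Real.exp_pos (-p)]
  rw [abs_sub_le_iff]
  constructor
  · refine (key a b).trans ?_
    have := Real.exp_pos (-b)
    have := abs_nonneg (a - b)
    nlinarith
  · refine (key b a).trans ?_
    rw [abs_sub_comm]
    have := Real.exp_pos (-a)
    have := abs_nonneg (a - b)
    nlinarith

lemma aux_poly_bound {r γ : ℝ} (hr : 0 ≤ r) (hγ0 : 0 < γ) (hγ1 : γ ≤ 1) :
    (2 * r + 1) * (r + 1) ^ γ * Real.exp (-r ^ 2 / 4) ≤ 45 * Real.exp (-(1/8) * r ^ 2) := by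
  have h1 : (r + 1) ^ γ ≤ (r + 1) ^ (1 : ℝ) :=
    Real.rpow_le_rpow_of_exponent_le (by linarith) hγ1
  rw [Real.rpow_one] at h1
  have h2 : (2 * r + 1) * (r + 1) ^ γ ≤ 5 * (r ^ 2 + 1) := by
    have hp : (0:ℝ) < 2 * r + 1 := by linarith
    nlinarith [Real.rpow_nonneg (by linarith : (0:ℝ) ≤ r + 1) γ]
  have h3 : Real.exp (-r ^ 2 / 4) = Real.exp (-(1/8) * r ^ 2) * Real.exp (-(1/8) * r ^ 2) := by
    rw [← Real.exp_add]; ring_nf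
  have h4 : (r ^ 2 + 1) * Real.exp (-(1/8) * r ^ 2) ≤ 9 := by
    have hs : (r ^ 2 / 8) + 1 ≤ Real.exp (r ^ 2 / 8) := Real.add_one_le_exp _
    have he : Real.exp (-(1/8) * r ^ 2) = (Real.exp (r ^ 2 / 8))⁻¹ := by
      rw [← Real.exp_neg]; ring_nf
    rw [he, mul_inv_le_iff₀ (Real.exp_pos _)]
    nlinarith [Real.exp_pos (r ^ 2 / 8)]
  have hePos := Real.exp_pos (-(1/8) * r ^ 2)
  calc (2 * r + 1) * (r + 1) ^ γ * Real.exp (-r ^ 2 / 4)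
      ≤ 5 * (r ^ 2 + 1) * Real.exp (-r ^ 2 / 4) := by
        apply mul_le_mul_of_nonneg_right h2 (Real.exp_nonneg _)
    _ = 5 * ((r ^ 2 + 1) * Real.exp (-(1/8) * r ^ 2)) * Real.exp (-(1/8) * r ^ 2) := by
        rw [h3]; ring
    _ ≤ 5 * 9 * Real.exp (-(1/8) * r ^ 2) := by
        apply mul_le_mul_of_nonneg_right _ (Real.exp_nonneg _)
        nlinarith
    _ = 45 * Real.exp (-(1/8) * r ^ 2) := by norm_num

lemma aux_psi_int (d : ℕ) {γ : ℝ} (hγ0 : 0 < γ) (hγ1 : γ ≤ 1) :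
    Integrable (fun w : EuclideanSpace ℝ (Fin d) =>
      (2 * ‖w‖ + 1) * (‖w‖ + 1) ^ γ * Real.exp (-‖w‖ ^ 2 / 4)) := by
  have hcont : Continuous (fun w : EuclideanSpace ℝ (Fin d) =>
      (2 * ‖w‖ + 1) * (‖w‖ + 1) ^ γ * Real.exp (-‖w‖ ^ 2 / 4)) := by
    apply Continuous.mul
    · apply Continuous.mul (by fun_prop)
      apply Continuous.rpow_const (by fun_prop)
      intro x; right; exact hγ0.le
    · fun_prop
  refine Integrable.mono' (((aux_exp_int d (by norm_num : (0:ℝ) < 1/8)).const_mul 45))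
    hcont.aestronglyMeasurable ?_
  filter_upwards with w
  rw [Real.norm_eq_abs, abs_of_nonneg]
  · exact aux_poly_bound (norm_nonneg w) hγ0 hγ1
  · positivity

end Aux

set_option maxHeartbeats 2000000 in
/-- heat-semigroup smoothing between Hölder classes:
`[e^(tΔ)f]_(C^β) ≲ t^(−(β−γ)/2) [f]_(C^γ)`. -/
theorem stmt14 (d : ℕ) (hd : 1 ≤ d) (β γ : ℝ) (hγ : 0 < γ) (hβγ : γ < β) (hβ : β < 1) :
    ∃ C : ℝ, 0 < C ∧
      ∀ m : ℕ, 1 ≤ m →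
      ∀ f : (EuclideanSpace ℝ (Fin d)) → EuclideanSpace ℝ (Fin m),
        Continuous f → (∃ B : ℝ, ∀ x, ‖f x‖ ≤ B) →
        ∀ M : ℝ, (∀ x y, ‖f x - f y‖ ≤ M * ‖x - y‖ ^ γ) →
        ∀ t : ℝ, 0 < t → ∀ x y : (EuclideanSpace ℝ (Fin d)),
          ‖(∫ z, heatKernel d t z • f (x - z)) - ∫ z, heatKernel d t z • f (y - z)‖ ≤
            C * t ^ (-(β - γ) / 2) * M * ‖x - y‖ ^ β := by
  have hγ1 : γ ≤ 1 := (hβγ.trans hβ).le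
  set C₀ : ℝ := (4 * Real.pi) ^ (-(d : ℝ) / 2) with hC₀
  have hC₀pos : 0 < C₀ := Real.rpow_pos_of_pos (by positivity) _
  clear_value C₀
  set K₀ : ℝ := ∫ w : EuclideanSpace ℝ (Fin d), Real.exp (-‖w‖ ^ 2 / 4) with hK₀
  set K₁ : ℝ := ∫ w : EuclideanSpace ℝ (Fin d),
      (2 * ‖w‖ + 1) * (‖w‖ + 1) ^ γ * Real.exp (-‖w‖ ^ 2 / 4) with hK₁
  have hK₀nn : 0 ≤ K₀ := integral_nonneg (fun w => (Real.exp_nonneg _))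
  have hK₁nn : 0 ≤ K₁ := integral_nonneg (fun w => by positivity)
  clear_value K₀ K₁
  refine ⟨C₀ * (K₀ + K₁) + 1, by nlinarith, ?_⟩
  intro m hm f hcf hBex M hM t ht x y
  obtain ⟨B, hB⟩ := hBex
  set C : ℝ := C₀ * (K₀ + K₁) + 1 with hCdef
  clear_value C
  -- M is nonnegative
  have hMnn : 0 ≤ M := by
    have h1 : ‖(0 : EuclideanSpace ℝ (Fin d)) - EuclideanSpace.single (⟨0, hd⟩ : Fin d) (1:ℝ)‖
        = 1 := by
      rw [zero_sub, norm_neg, EuclideanSpace.norm_single]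
      norm_num
    have h2 := hM 0 (EuclideanSpace.single (⟨0, hd⟩ : Fin d) (1:ℝ))
    rw [h1, Real.one_rpow, mul_one] at h2
    exact (norm_nonneg _).trans h2
  by_cases hxy : x = y
  · subst hxy
    have hβ0 : β ≠ 0 := (hγ.trans hβγ).ne'
    simp [Real.zero_rpow hβ0]
  have hd0 : 0 < ‖x - y‖ := by
    rw [norm_pos_iff, sub_ne_zero]; exact hxy
  -- kernel basics
  set c : ℝ := (4 * Real.pi * t) ^ (-(d : ℝ) / 2) with hc
  have hcpos : 0 < c := Real.rpow_pos_of_pos (by positivity) _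
  set G := heatKernel d t with hG
  have hGdef : ∀ z, G z = c * Real.exp (-‖z‖ ^ 2 / (4 * t)) := fun z => rfl
  have hGpos : ∀ z, 0 < G z := fun z => by rw [hGdef]; positivity
  clear_value c G
  have hGcont : Continuous G := by
    rw [hG]; unfold heatKernel; fun_prop
  have hGint : Integrable G := by
    have h := (aux_exp_int d (b := 1/(4*t)) (by positivity)).const_mul c
    have he : (fun v : EuclideanSpace ℝ (Fin d) => c * Real.exp (-(1/(4*t)) * ‖v‖ ^ 2)) = G := by
      funext z; rw [hGdef]; congr 1; ring
    rwa [he] at h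
  have hB0 : 0 ≤ B := le_trans (norm_nonneg (f 0)) (hB 0)
  have hint : ∀ a, Integrable (fun z => G z • f (a - z)) := by
    intro a
    refine Integrable.mono' (hGint.const_mul B)
      ((hGcont.smul (hcf.comp (continuous_const.sub continuous_id))).aestronglyMeasurable) ?_
    filter_upwards with z
    rw [norm_smul, Real.norm_eq_abs, abs_of_pos (hGpos z), mul_comm B (G z)]
    exact mul_le_mul_of_nonneg_left (hB _) (hGpos z).le
  -- scaling quantities
  set s := Real.sqrt t with hsdef
  have hspos : 0 < s := Real.sqrt_pos.mpr ht
  have hst : s ^ 2 = t := Real.sq_sqrt ht.le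
  have hsr : s = t ^ ((1:ℝ)/2) := by rw [hsdef, Real.sqrt_eq_rpow]
  clear_value s
  have hnsi : ∀ v : EuclideanSpace ℝ (Fin d), ‖s⁻¹ • v‖ = s⁻¹ * ‖v‖ := by
    intro v
    rw [norm_smul, Real.norm_eq_abs, abs_of_pos (inv_pos.mpr hspos)]
  have hexp_scale : ∀ v : EuclideanSpace ℝ (Fin d),
      Real.exp (-‖s⁻¹ • v‖ ^ 2 / 4) = Real.exp (-‖v‖ ^ 2 / (4 * t)) := by
    intro v
    congr 1
    rw [hnsi, mul_pow, inv_pow, hst]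
    field_simp
  have hfinr : Module.finrank ℝ (EuclideanSpace ℝ (Fin d)) = d := finrank_euclideanSpace_fin
  -- halg : c * s ^ d = C₀
  have halg : c * s ^ d = C₀ := by
    have h2 : s ^ d = t ^ ((d:ℝ)/2) := by
      rw [hsr, ← Real.rpow_natCast (t ^ ((1:ℝ)/2)) d, ← Real.rpow_mul ht.le]
      congr 1; ring
    rw [hc, hC₀, Real.mul_rpow (by positivity) ht.le, h2, mul_assoc, ← Real.rpow_add ht,
      show (-(d:ℝ)/2 + (d:ℝ)/2) = 0 by ring, Real.rpow_zero, mul_one]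
  -- the total mass of the kernel
  have hGval : ∫ z, G z = C₀ * K₀ := by
    have he : G = fun v => c * (fun w : EuclideanSpace ℝ (Fin d) =>
        Real.exp (-‖w‖ ^ 2 / 4)) (s⁻¹ • v) := by
      funext v
      rw [hGdef v]
      show c * Real.exp (-‖v‖ ^ 2 / (4 * t)) = c * Real.exp (-‖s⁻¹ • v‖ ^ 2 / 4)
      rw [hexp_scale v]
    rw [he, MeasureTheory.integral_const_mul,
      MeasureTheory.Measure.integral_comp_inv_smul_of_nonneg volume
        (fun w : EuclideanSpace ℝ (Fin d) => Real.exp (-‖w‖ ^ 2 / 4)) hspos.le,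
      hfinr, smul_eq_mul, ← hK₀, ← mul_assoc, halg]
  -- Φ : the rescaled majorant
  set Φ : EuclideanSpace ℝ (Fin d) → ℝ :=
    fun v => (2 * ‖v‖ + s) * (‖v‖ + s) ^ γ * Real.exp (-‖v‖ ^ 2 / (4 * t)) with hΦ
  have hΦap : ∀ v, Φ v = (2 * ‖v‖ + s) * (‖v‖ + s) ^ γ * Real.exp (-‖v‖ ^ 2 / (4 * t)) :=
    fun v => rfl
  clear_value Φ
  set ψ : EuclideanSpace ℝ (Fin d) → ℝ :=
    fun w => (2 * ‖w‖ + 1) * (‖w‖ + 1) ^ γ * Real.exp (-‖w‖ ^ 2 / 4) with hψ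
  have hψint : Integrable ψ := by rw [hψ]; exact aux_psi_int d hγ hγ1
  have hΦeq : Φ = fun v => (s * s ^ γ) * ψ (s⁻¹ • v) := by
    funext v
    simp only [hψ, hΦ]
    rw [hexp_scale, hnsi]
    have h1 : (‖v‖ + s) ^ γ = s ^ γ * (s⁻¹ * ‖v‖ + 1) ^ γ := by
      rw [← Real.mul_rpow hspos.le (by positivity)]
      congr 1
      field_simp
    rw [h1]
    have h2 : 2 * ‖v‖ + s = s * (2 * (s⁻¹ * ‖v‖) + 1) := by field_simp
    rw [h2]; ring
  have hΦint : Integrable Φ := by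
    rw [hΦeq]
    exact ((integrable_comp_smul_iff volume ψ (inv_ne_zero hspos.ne')).mpr hψint).const_mul _
  have hΦval : ∫ v, Φ v = (s * s ^ γ) * (s ^ d * K₁) := by
    rw [hΦeq, MeasureTheory.integral_const_mul,
      MeasureTheory.Measure.integral_comp_inv_smul_of_nonneg volume ψ hspos.le,
      hfinr, smul_eq_mul, ← hK₁]
  -- representation of the convolution difference
  have hint2 : ∀ a, Integrable (fun w => G (a - w) • f w) := by
    intro a
    have h := (integrable_comp_sub_left (fun z => G z • f (a - z)) a).mpr (hint a)
    simpa using h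
  have hintG2 : ∀ a, Integrable (fun w => G (a - w)) :=
    fun a => (integrable_comp_sub_left G a).mpr hGint
  have hrepr : ∀ a, (∫ z, G z • f (a - z)) = ∫ w, G (a - w) • f w := by
    intro a
    have h := integral_sub_left_eq_self (fun w => G (a - w) • f w) volume a
    simpa using h
  have hI1 : Integrable (fun w => (G (x - w) - G (y - w)) • f w) := by
    have he : (fun w => G (x - w) • f w - G (y - w) • f w)
        = (fun w => (G (x - w) - G (y - w)) • f w) := by
      funext w; rw [sub_smul]
    rw [← he]; exact (hint2 x).sub (hint2 y)
  have hI2 : Integrable (fun w => (G (x - w) - G (y - w)) • f x) :=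
    ((hintG2 x).sub (hintG2 y)).smul_const (f x)
  have hI3 : Integrable (fun w => (G (x - w) - G (y - w)) • (f w - f x)) := by
    have he : (fun w => (G (x - w) - G (y - w)) • f w - (G (x - w) - G (y - w)) • f x)
        = fun w => (G (x - w) - G (y - w)) • (f w - f x) := by
      funext w; rw [smul_sub]
    rw [← he]; exact hI1.sub hI2
  have hdiff : (∫ z, G z • f (x - z)) - (∫ z, G z • f (y - z))
      = ∫ w, (G (x - w) - G (y - w)) • (f w - f x) := by
    have hzero : (∫ w, (G (x - w) - G (y - w)) • f x) = 0 := by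
      rw [integral_smul_const]
      have h1 : (∫ w, (G (x - w) - G (y - w))) = 0 := by
        rw [integral_sub (hintG2 x) (hintG2 y),
          integral_sub_left_eq_self G volume x, integral_sub_left_eq_self G volume y, sub_self]
      rw [h1, zero_smul]
    rw [hrepr x, hrepr y, ← integral_sub (hint2 x) (hint2 y)]
    have he : (fun w => G (x - w) • f w - G (y - w) • f w)
        = (fun w => (G (x - w) - G (y - w)) • f w) := by
      funext w; rw [sub_smul]
    rw [he, eq_comm]
    have he2 : (fun w => (G (x - w) - G (y - w)) • (f w - f x))
        = fun w => (G (x - w) - G (y - w)) • f w - (G (x - w) - G (y - w)) • f x := by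
      funext w; rw [smul_sub]
    rw [he2, integral_sub hI1 hI2, hzero, sub_zero]
  rcases le_total s ‖x - y‖ with hfar | hnear
  · -- FAR CASE : s ≤ ‖x - y‖
    have hintd : Integrable (fun z => G z • (f (x - z) - f (y - z))) := by
      have he : (fun z => G z • f (x - z) - G z • f (y - z))
          = fun z => G z • (f (x - z) - f (y - z)) := by
        funext z; rw [smul_sub]
      rw [← he]; exact (hint x).sub (hint y)
    have hsub : (∫ z, G z • f (x - z)) - ∫ z, G z • f (y - z)
        = ∫ z, G z • (f (x - z) - f (y - z)) := by
      rw [← integral_sub (hint x) (hint y)]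
      congr 1; funext z; rw [smul_sub]
    rw [hsub]
    have step1 : ‖∫ z, G z • (f (x - z) - f (y - z))‖
        ≤ ∫ z, G z * (M * ‖x - y‖ ^ γ) := by
      refine (norm_integral_le_integral_norm _).trans ?_
      refine integral_mono hintd.norm (hGint.mul_const _) fun z => ?_
      rw [norm_smul, Real.norm_eq_abs, abs_of_pos (hGpos z)]
      refine mul_le_mul_of_nonneg_left ?_ (hGpos z).le
      have h := hM (x - z) (y - z)
      rwa [sub_sub_sub_cancel_right] at h
    have step2 : (∫ z, G z * (M * ‖x - y‖ ^ γ)) = C₀ * K₀ * (M * ‖x - y‖ ^ γ) := by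
      rw [integral_mul_const, hGval]
    have hrp : ‖x - y‖ ^ γ ≤ t ^ (-(β - γ) / 2) * ‖x - y‖ ^ β := by
      have e1 : ‖x - y‖ ^ γ = ‖x - y‖ ^ β * ‖x - y‖ ^ (γ - β) := by
        rw [← Real.rpow_add hd0]; congr 1; ring
      have e2 : ‖x - y‖ ^ (γ - β) ≤ s ^ (γ - β) :=
        Real.rpow_le_rpow_of_nonpos hspos hfar (by linarith)
      have e3 : s ^ (γ - β) = t ^ (-(β - γ) / 2) := by
        rw [hsr, ← Real.rpow_mul ht.le]; congr 1; ring
      calc ‖x - y‖ ^ γ = ‖x - y‖ ^ β * ‖x - y‖ ^ (γ - β) := e1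
        _ ≤ ‖x - y‖ ^ β * t ^ (-(β - γ) / 2) :=
            mul_le_mul_of_nonneg_left (e2.trans_eq e3) (by positivity)
        _ = t ^ (-(β - γ) / 2) * ‖x - y‖ ^ β := mul_comm _ _
    calc ‖∫ z, G z • (f (x - z) - f (y - z))‖
        ≤ C₀ * K₀ * (M * ‖x - y‖ ^ γ) := step1.trans step2.le
      _ ≤ C₀ * K₀ * (M * (t ^ (-(β - γ) / 2) * ‖x - y‖ ^ β)) := by
          refine mul_le_mul_of_nonneg_left ?_ (mul_nonneg hC₀pos.le hK₀nn)
          exact mul_le_mul_of_nonneg_left hrp hMnn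
      _ ≤ C * t ^ (-(β - γ) / 2) * M * ‖x - y‖ ^ β := by
          have h1 : C₀ * K₀ ≤ C := by rw [hCdef]; nlinarith
          have h2 : 0 ≤ M * (t ^ (-(β - γ) / 2) * ‖x - y‖ ^ β) :=
            mul_nonneg hMnn (mul_nonneg (Real.rpow_nonneg ht.le _)
              (Real.rpow_nonneg (norm_nonneg _) _))
          calc C₀ * K₀ * (M * (t ^ (-(β - γ) / 2) * ‖x - y‖ ^ β))
              ≤ C * (M * (t ^ (-(β - γ) / 2) * ‖x - y‖ ^ β)) :=
                mul_le_mul_of_nonneg_right h1 h2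
            _ = C * t ^ (-(β - γ) / 2) * M * ‖x - y‖ ^ β := by ring
  · -- NEAR CASE : ‖x - y‖ ≤ s
    have hpt : ∀ w, ‖(G (x - w) - G (y - w)) • (f w - f x)‖
        ≤ (c * M * ‖x - y‖ / (4 * t)) * (Φ (x - w) + Φ (y - w)) := by
      intro w
      have hEa : G (x - w) = c * Real.exp (-(‖x - w‖ ^ 2 / (4 * t))) := by
        rw [hGdef]; congr 1; ring
      have hEb : G (y - w) = c * Real.exp (-(‖y - w‖ ^ 2 / (4 * t))) := by
        rw [hGdef]; congr 1; ring
      have hab : |‖x - w‖ ^ 2 / (4 * t) - ‖y - w‖ ^ 2 / (4 * t)|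
          ≤ ‖x - y‖ * (‖x - w‖ + ‖y - w‖) / (4 * t) := by
        rw [div_sub_div_same, abs_div, abs_of_pos (by positivity : (0:ℝ) < 4 * t)]
        gcongr
        have h1 : ‖x - w‖ ^ 2 - ‖y - w‖ ^ 2 = (‖x - w‖ - ‖y - w‖) * (‖x - w‖ + ‖y - w‖) := by
          ring
        rw [h1, abs_mul, abs_of_nonneg (show (0:ℝ) ≤ ‖x - w‖ + ‖y - w‖ by positivity)]
        refine mul_le_mul_of_nonneg_right ?_
          (show (0:ℝ) ≤ ‖x - w‖ + ‖y - w‖ by positivity)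
        have h2 := abs_norm_sub_norm_le (x - w) (y - w)
        rwa [sub_sub_sub_cancel_right] at h2
      have hGd : |G (x - w) - G (y - w)|
          ≤ c * (|‖x - w‖ ^ 2 / (4 * t) - ‖y - w‖ ^ 2 / (4 * t)|
              * (Real.exp (-(‖x - w‖ ^ 2 / (4 * t))) + Real.exp (-(‖y - w‖ ^ 2 / (4 * t))))) := by
        rw [hEa, hEb, ← mul_sub, abs_mul, abs_of_pos hcpos]
        exact mul_le_mul_of_nonneg_left
          (aux_exp_diff (‖x - w‖ ^ 2 / (4 * t)) (‖y - w‖ ^ 2 / (4 * t))) hcpos.le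
      have hfw : ‖f w - f x‖ ≤ M * ‖x - w‖ ^ γ := by
        have h := hM w x
        rwa [norm_sub_rev w x] at h
      have hq1 : ‖y - w‖ ≤ ‖x - w‖ + s := by
        have h1 : ‖y - w‖ ≤ ‖y - x‖ + ‖x - w‖ := norm_sub_le_norm_sub_add_norm_sub y x w
        have h2 : ‖y - x‖ ≤ s := by rw [norm_sub_rev]; exact hnear
        linarith
      have hq2 : ‖x - w‖ ≤ ‖y - w‖ + s := by
        have h1 : ‖x - w‖ ≤ ‖x - y‖ + ‖y - w‖ := norm_sub_le_norm_sub_add_norm_sub x y w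
        linarith
      rw [norm_smul, Real.norm_eq_abs]
      calc |G (x - w) - G (y - w)| * ‖f w - f x‖
          ≤ (c * (|‖x - w‖ ^ 2 / (4 * t) - ‖y - w‖ ^ 2 / (4 * t)|
              * (Real.exp (-(‖x - w‖ ^ 2 / (4 * t))) + Real.exp (-(‖y - w‖ ^ 2 / (4 * t))))))
            * (M * ‖x - w‖ ^ γ) := by
            refine mul_le_mul hGd hfw (norm_nonneg _) ?_
            positivity
        _ ≤ (c * ((‖x - y‖ * (‖x - w‖ + ‖y - w‖) / (4 * t))
              * (Real.exp (-(‖x - w‖ ^ 2 / (4 * t))) + Real.exp (-(‖y - w‖ ^ 2 / (4 * t))))))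
            * (M * ‖x - w‖ ^ γ) := by gcongr
        _ = (c * M * ‖x - y‖ / (4 * t))
            * ((‖x - w‖ + ‖y - w‖) * ‖x - w‖ ^ γ * Real.exp (-(‖x - w‖ ^ 2 / (4 * t)))
              + (‖x - w‖ + ‖y - w‖) * ‖x - w‖ ^ γ * Real.exp (-(‖y - w‖ ^ 2 / (4 * t)))) := by
            ring
        _ ≤ (c * M * ‖x - y‖ / (4 * t)) * (Φ (x - w) + Φ (y - w)) := by
            refine mul_le_mul_of_nonneg_left ?_ (by positivity)
            have hterm1 : (‖x - w‖ + ‖y - w‖) * ‖x - w‖ ^ γ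
                  * Real.exp (-(‖x - w‖ ^ 2 / (4 * t))) ≤ Φ (x - w) := by
              rw [hΦap, show -‖x - w‖ ^ 2 / (4 * t) = -(‖x - w‖ ^ 2 / (4 * t)) by ring]
              refine mul_le_mul_of_nonneg_right ?_ (Real.exp_nonneg _)
              refine mul_le_mul (by linarith)
                (Real.rpow_le_rpow (norm_nonneg _) (by linarith [hspos.le]) hγ.le)
                (by positivity) (by positivity)
            have hterm2 : (‖x - w‖ + ‖y - w‖) * ‖x - w‖ ^ γ
                  * Real.exp (-(‖y - w‖ ^ 2 / (4 * t))) ≤ Φ (y - w) := by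
              rw [hΦap, show -‖y - w‖ ^ 2 / (4 * t) = -(‖y - w‖ ^ 2 / (4 * t)) by ring]
              refine mul_le_mul_of_nonneg_right ?_ (Real.exp_nonneg _)
              refine mul_le_mul (by linarith)
                (Real.rpow_le_rpow (norm_nonneg _) (by linarith) hγ.le)
                (by positivity) (by positivity)
            exact add_le_add hterm1 hterm2
    have hΦx : Integrable (fun w => Φ (x - w)) := (integrable_comp_sub_left Φ x).mpr hΦint
    have hΦy : Integrable (fun w => Φ (y - w)) := (integrable_comp_sub_left Φ y).mpr hΦint
    rw [hdiff]
    have step1 : ‖∫ w, (G (x - w) - G (y - w)) • (f w - f x)‖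
        ≤ ∫ w, (c * M * ‖x - y‖ / (4 * t)) * (Φ (x - w) + Φ (y - w)) := by
      refine (norm_integral_le_integral_norm _).trans ?_
      exact integral_mono hI3.norm ((hΦx.add hΦy).const_mul _) hpt
    have step2 : (∫ w, (c * M * ‖x - y‖ / (4 * t)) * (Φ (x - w) + Φ (y - w)))
        = (c * M * ‖x - y‖ / (4 * t)) * (2 * ((s * s ^ γ) * (s ^ d * K₁))) := by
      rw [MeasureTheory.integral_const_mul, integral_add hΦx hΦy,
        integral_sub_left_eq_self Φ volume x, integral_sub_left_eq_self Φ volume y, hΦval]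
      ring
    have key1 : ‖x - y‖ ^ (1 - β) ≤ s ^ (1 - β) :=
      Real.rpow_le_rpow hd0.le hnear (by linarith)
    have key2 : ‖x - y‖ ^ β * ‖x - y‖ ^ (1 - β) = ‖x - y‖ := by
      rw [← Real.rpow_add hd0, show β + (1 - β) = (1:ℝ) by ring, Real.rpow_one]
    have e1 : s * s ^ γ = t ^ ((1 + γ) / 2) := by
      rw [hsr, ← Real.rpow_mul ht.le, ← Real.rpow_add ht]
      congr 1; ring
    have e2 : s ^ (1 - β) = t ^ ((1 - β) / 2) := by
      rw [hsr, ← Real.rpow_mul ht.le]; congr 1; ring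
    have hstep : ‖x - y‖ * (s * s ^ γ) / t ≤ t ^ (-(β - γ) / 2) * ‖x - y‖ ^ β := by
      calc ‖x - y‖ * (s * s ^ γ) / t
          = (‖x - y‖ ^ β * ‖x - y‖ ^ (1 - β)) * (s * s ^ γ) / t := by rw [key2]
        _ ≤ (‖x - y‖ ^ β * s ^ (1 - β)) * (s * s ^ γ) / t := by gcongr
        _ = ‖x - y‖ ^ β * (t ^ ((1 - β) / 2) * t ^ ((1 + γ) / 2) / t) := by
            rw [e1, e2]; ring
        _ = ‖x - y‖ ^ β * t ^ (-(β - γ) / 2) := by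
            rw [← Real.rpow_add ht]
            have h3 : t ^ ((1 - β) / 2 + (1 + γ) / 2) / t
                = t ^ ((1 - β) / 2 + (1 + γ) / 2 - 1) := by
              rw [Real.rpow_sub ht, Real.rpow_one]
            rw [h3, show (1 - β) / 2 + (1 + γ) / 2 - 1 = -(β - γ) / 2 by ring]
        _ = t ^ (-(β - γ) / 2) * ‖x - y‖ ^ β := mul_comm _ _
    have hCKnn : (0:ℝ) ≤ C₀ * K₁ / 2 := div_nonneg (mul_nonneg hC₀pos.le hK₁nn) (by norm_num)
    calc ‖∫ w, (G (x - w) - G (y - w)) • (f w - f x)‖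
        ≤ (c * M * ‖x - y‖ / (4 * t)) * (2 * ((s * s ^ γ) * (s ^ d * K₁))) :=
          step1.trans step2.le
      _ = (C₀ * K₁ / 2) * M * (‖x - y‖ * (s * s ^ γ) / t) := by
          rw [← halg]; field_simp; ring
      _ ≤ (C₀ * K₁ / 2) * M * (t ^ (-(β - γ) / 2) * ‖x - y‖ ^ β) := by
          refine mul_le_mul_of_nonneg_left hstep (mul_nonneg hCKnn hMnn)
      _ ≤ C * t ^ (-(β - γ) / 2) * M * ‖x - y‖ ^ β := by
          have h1 : C₀ * K₁ / 2 ≤ C := by rw [hCdef]; nlinarith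
          have h2 : 0 ≤ M * (t ^ (-(β - γ) / 2) * ‖x - y‖ ^ β) :=
            mul_nonneg hMnn (mul_nonneg (Real.rpow_nonneg ht.le _)
              (Real.rpow_nonneg (norm_nonneg _) _))
          calc (C₀ * K₁ / 2) * M * (t ^ (-(β - γ) / 2) * ‖x - y‖ ^ β)
              = (C₀ * K₁ / 2) * (M * (t ^ (-(β - γ) / 2) * ‖x - y‖ ^ β)) := by ring
            _ ≤ C * (M * (t ^ (-(β - γ) / 2) * ‖x - y‖ ^ β)) :=
                mul_le_mul_of_nonneg_right h1 h2
            _ = C * t ^ (-(β - γ) / 2) * M * ‖x - y‖ ^ β := by ring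
end

section
/- Let α ∈ (0,1) and let f : ℝ^d → ℝ^m be bounded and continuous with [f]_{C^α} < ∞. Then there exists a constant C depending only on α and d such that for all t > 0 and h > 0: sup_{x ∈ ℝ^d} |(G_{t+h} * f)(x) − (G_t * f)(x)| ≤ C [f]_{C^α} t^{−α/2} h^α. -/
/-!
Since each `G_s` has unit mass,
`(G_{t+h} * f - G_t * f)(x) = ∫ (G_{t+h} - G_t)(y) (f(x-y) - f(x)) dy`,
which is at most `[f]_α ∫ |G_{t+h} - G_t|(y) |y|^α dy`. Writing `G_{t+h} - G_t = ∫_t^{t+h} ∂ₛ G_s`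
with `|∂ₛ G_s(y)| ≤ G_s(y) (|y|²/(4s²) + d/(2s))`, Fubini and the parabolic scaling
`G_s(√s z) = s^{-d/2} G_1(z)` bound this by `c ∫_t^{t+h} s^{α/2-1} ds`, and
`∫_t^{t+h} s^{α/2-1} ds ≤ t^{-α/2} ∫_t^{t+h} s^{α-1} ds ≤ α⁻¹ t^{-α/2} h^α`
by subadditivity of `r ↦ r^α`.
-/

open MeasureTheory Set
open scoped ENNReal

open Real

theorem rpow_mul_exp_neg_mul_sq_le {β b r : ℝ} (hβ : 0 ≤ β) (hb : 0 < b) (hr : 0 ≤ r) :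
    r ^ β * exp (-b * r ^ 2) ≤ exp (β ^ 2 / (4 * b)) := by
  have hpow : r ^ β ≤ exp (β * r) :=
    calc r ^ β ≤ exp r ^ β := rpow_le_rpow hr ((add_one_le_exp r).trans' (by linarith)) hβ
      _ = exp (β * r) := by rw [← exp_mul, mul_comm]
  have hsq : β * r - b * r ^ 2 ≤ β ^ 2 / (4 * b) := by
    rw [le_div_iff₀ (by positivity)]
    nlinarith [sq_nonneg (2 * b * r - β)]
  calc r ^ β * exp (-b * r ^ 2) ≤ exp (β * r) * exp (-b * r ^ 2) := by gcongr
    _ = exp (β * r - b * r ^ 2) := by rw [← exp_add]; ring_nf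
    _ ≤ exp (β ^ 2 / (4 * b)) := exp_le_exp.2 hsq

theorem integral_rpow_div_two_sub_one_le {α t h : ℝ} (hα : 0 < α) (hα1 : α ≤ 1) (ht : 0 < t)
    (hh : 0 ≤ h) :
    ∫ s in t..t + h, s ^ (α / 2 - 1) ≤ α⁻¹ * t ^ (-α / 2) * h ^ α := by
  have h0 : (0 : ℝ) ∉ uIcc t (t + h) := by
    rw [uIcc_of_le (by linarith)]
    exact fun h0 => (ht.trans_le h0.1).false
  calc ∫ s in t..t + h, s ^ (α / 2 - 1)
      ≤ ∫ s in t..t + h, t ^ (-α / 2) * s ^ (α - 1) := by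
        refine intervalIntegral.integral_mono_on (by linarith)
          (intervalIntegral.intervalIntegrable_rpow (Or.inr h0))
          ((intervalIntegral.intervalIntegrable_rpow (Or.inr h0)).const_mul _) fun s hs => ?_
        calc s ^ (α / 2 - 1) = s ^ (-α / 2) * s ^ (α - 1) := by
              rw [← rpow_add (ht.trans_le hs.1)]; ring_nf
          _ ≤ t ^ (-α / 2) * s ^ (α - 1) := mul_le_mul_of_nonneg_right
              (rpow_le_rpow_of_nonpos ht hs.1 (by linarith)) (rpow_nonneg (ht.le.trans hs.1) _)
    _ = α⁻¹ * t ^ (-α / 2) * ((t + h) ^ α - t ^ α) := by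
        rw [intervalIntegral.integral_const_mul, integral_rpow (Or.inl (by linarith))]
        simp only [sub_add_cancel]
        ring
    _ ≤ α⁻¹ * t ^ (-α / 2) * h ^ α := by
        gcongr
        linarith [rpow_add_le_add_rpow ht.le hh hα.le hα1]

section Gaussian

variable {V : Type*} [NormedAddCommGroup V] [InnerProductSpace ℝ V] [FiniteDimensional ℝ V]
  [MeasurableSpace V] [BorelSpace V]

theorem integrable_exp_neg_mul_sq_norm {b : ℝ} (hb : 0 < b) :
    Integrable fun v : V => exp (-b * ‖v‖ ^ 2) := by
  refine Integrable.of_integral_ne_zero ?_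
  rw [GaussianFourier.integral_rexp_neg_mul_sq_norm hb]
  positivity

theorem integrable_rpow_norm_mul_exp_neg_mul_sq_norm {β b : ℝ} (hβ : 0 ≤ β) (hb : 0 < b) :
    Integrable fun v : V => ‖v‖ ^ β * exp (-b * ‖v‖ ^ 2) := by
  refine ((integrable_exp_neg_mul_sq_norm (V := V) (half_pos hb)).const_mul
    (exp (β ^ 2 / (4 * (b / 2))))).mono' (by fun_prop) (ae_of_all _ fun v => ?_)
  have hsplit : exp (-b * ‖v‖ ^ 2) = exp (-(b / 2) * ‖v‖ ^ 2) * exp (-(b / 2) * ‖v‖ ^ 2) := by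
    rw [← exp_add]; ring_nf
  rw [norm_of_nonneg (by positivity), hsplit, ← mul_assoc]
  gcongr
  exact rpow_mul_exp_neg_mul_sq_le hβ (half_pos hb) (norm_nonneg v)

end Gaussian

section Increment

variable {X E : Type*} [MeasurableSpace X] {μ : Measure X} [NormedAddCommGroup E]
  [NormedSpace ℝ E] [CompleteSpace E]

theorem norm_integral_smul_sub_integral_smul_le {k₁ k₂ w : X → ℝ} {g : X → E} (c : E)
    (hk₁ : Integrable k₁ μ) (hk₂ : Integrable k₂ μ) (hmass : ∫ x, k₁ x ∂μ = ∫ x, k₂ x ∂μ)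
    (hg₁ : Integrable (fun x => k₁ x • g x) μ) (hg₂ : Integrable (fun x => k₂ x • g x) μ)
    (hgw : ∀ x, ‖g x - c‖ ≤ w x) (hw : Integrable (fun x => |k₁ x - k₂ x| * w x) μ) :
    ‖∫ x, k₁ x • g x ∂μ - ∫ x, k₂ x • g x ∂μ‖ ≤ ∫ x, |k₁ x - k₂ x| * w x ∂μ := by
  have hcentered : ∫ x, k₁ x • g x ∂μ - ∫ x, k₂ x • g x ∂μ =
      ∫ x, (k₁ x - k₂ x) • (g x - c) ∂μ := by
    have hsplit (x : X) : (k₁ x - k₂ x) • (g x - c) =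
        (k₁ x • g x - k₂ x • g x) - (k₁ x - k₂ x) • c := by
      rw [smul_sub, sub_smul]
    simp_rw [hsplit]
    rw [integral_sub (hg₁.sub' hg₂) ((hk₁.sub' hk₂).smul_const c), integral_sub hg₁ hg₂,
      integral_smul_const, integral_sub hk₁ hk₂, hmass, sub_self, zero_smul, sub_zero]
  rw [hcentered]
  refine (norm_integral_le_integral_norm _).trans
    (integral_mono_of_nonneg (ae_of_all _ fun x => norm_nonneg _) hw (ae_of_all _ fun x => ?_))
  dsimp only
  rw [norm_smul, Real.norm_eq_abs]
  exact mul_le_mul_of_nonneg_left (hgw x) (abs_nonneg _)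

end Increment

theorem nonneg_of_forall_norm_sub_le_mul_rpow {V E : Type*} [NormedAddCommGroup V] [Nontrivial V]
    [NormedAddCommGroup E] {f : V → E} {α M : ℝ}
    (hM : ∀ x y, ‖f x - f y‖ ≤ M * ‖x - y‖ ^ α) : 0 ≤ M := by
  obtain ⟨x, hx⟩ := exists_ne (0 : V)
  have h := (norm_nonneg _).trans (hM x 0)
  rw [sub_zero] at h
  exact nonneg_of_mul_nonneg_left h (rpow_pos_of_pos (norm_pos_iff.2 hx) α)

section HeatKernel

variable {d : ℕ}

theorem heatKernel_nonneg {s : ℝ} (hs : 0 ≤ s) (y : EuclideanSpace ℝ (Fin d)) :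
    0 ≤ heatKernel d s y := by
  unfold heatKernel; positivity

theorem heatKernel_eq_rpow_mul_exp (s : ℝ) (y : EuclideanSpace ℝ (Fin d)) :
    heatKernel d s y = (4 * π * s) ^ (-(d : ℝ) / 2) * exp (-(4 * s)⁻¹ * ‖y‖ ^ 2) := by
  rw [heatKernel]; ring_nf

theorem integral_heatKernel {s : ℝ} (hs : 0 < s) : ∫ y, heatKernel d s y = 1 := by
  simp_rw [heatKernel_eq_rpow_mul_exp, integral_const_mul]
  rw [GaussianFourier.integral_rexp_neg_mul_sq_norm (by positivity), finrank_euclideanSpace_fin,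
    div_inv_eq_mul, ← mul_assoc, mul_comm π, neg_div, rpow_neg (by positivity)]
  exact inv_mul_cancel₀ (by positivity)

theorem integrable_heatKernel {s : ℝ} (hs : 0 < s) : Integrable (heatKernel d s) :=
  Integrable.of_integral_ne_zero (by rw [integral_heatKernel hs]; exact one_ne_zero)

theorem heatKernel_sqrt_smul {s : ℝ} (hs : 0 < s) (z : EuclideanSpace ℝ (Fin d)) :
    heatKernel d s (√s • z) = (√s ^ d)⁻¹ * heatKernel d 1 z := by
  have hnorm : ‖√s • z‖ ^ 2 = s * ‖z‖ ^ 2 := by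
    rw [norm_smul, norm_of_nonneg (sqrt_nonneg s), mul_pow, sq_sqrt hs.le]
  have hpow : (4 * π * s) ^ (-(d : ℝ) / 2) = (√s ^ d)⁻¹ * (4 * π * 1) ^ (-(d : ℝ) / 2) := by
    rw [mul_one, mul_rpow (by positivity) hs.le, mul_comm, sqrt_eq_rpow, ← rpow_natCast,
      ← rpow_mul hs.le, ← rpow_neg hs.le]
    ring_nf
  rw [heatKernel, heatKernel, hnorm, hpow, mul_assoc]
  congr 3
  field_simp

theorem integrable_heatKernel_mul_rpow_norm {s β : ℝ} (hs : 0 < s) (hβ : 0 ≤ β) :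
    Integrable fun y : EuclideanSpace ℝ (Fin d) => heatKernel d s y * ‖y‖ ^ β := by
  simp_rw [heatKernel_eq_rpow_mul_exp, mul_right_comm _ _ (‖_‖ ^ β), mul_assoc]
  exact (integrable_rpow_norm_mul_exp_neg_mul_sq_norm hβ (by positivity)).const_mul _

theorem integrable_abs_heatKernel_sub_mul_rpow_norm {t t' α : ℝ} (ht : 0 < t) (ht' : 0 < t')
    (hα : 0 ≤ α) :
    Integrable fun y : EuclideanSpace ℝ (Fin d) =>
      |heatKernel d t' y - heatKernel d t y| * ‖y‖ ^ α := by
  refine ((integrable_heatKernel_mul_rpow_norm ht' hα).sub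
    (integrable_heatKernel_mul_rpow_norm ht hα)).abs.congr (ae_of_all _ fun y => ?_)
  simp only [Pi.sub_apply, ← sub_mul, abs_mul, abs_of_nonneg (rpow_nonneg (norm_nonneg y) α)]

noncomputable def heatMoment (d : ℕ) (β : ℝ) : ℝ :=
  ∫ y : EuclideanSpace ℝ (Fin d), heatKernel d 1 y * ‖y‖ ^ β

theorem heatMoment_nonneg (d : ℕ) (β : ℝ) : 0 ≤ heatMoment d β :=
  integral_nonneg fun y => mul_nonneg (heatKernel_nonneg zero_le_one y) (by positivity)

theorem integral_heatKernel_mul_rpow_norm {s : ℝ} (hs : 0 < s) (β : ℝ) :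
    ∫ y, heatKernel d s y * ‖y‖ ^ β = s ^ (β / 2) * heatMoment d β := by
  have hscale := Measure.integral_comp_smul_of_nonneg volume
    (fun y : EuclideanSpace ℝ (Fin d) => heatKernel d s y * ‖y‖ ^ β) √s (hR := sqrt_nonneg s)
  have hnorm (z : EuclideanSpace ℝ (Fin d)) : ‖√s • z‖ ^ β = s ^ (β / 2) * ‖z‖ ^ β := by
    rw [norm_smul, norm_of_nonneg (sqrt_nonneg s), mul_rpow (sqrt_nonneg s) (norm_nonneg z),
      sqrt_eq_rpow, ← rpow_mul hs.le]
    ring_nf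
  simp_rw [heatKernel_sqrt_smul hs, hnorm, finrank_euclideanSpace_fin, smul_eq_mul] at hscale
  rw [heatMoment, ← mul_left_cancel_iff_of_pos (a := (√s ^ d)⁻¹) (by positivity), ← hscale,
    ← integral_const_mul, ← integral_const_mul]
  congr 1 with z
  ring

theorem hasDerivAt_heatKernel {s : ℝ} (hs : 0 < s) (y : EuclideanSpace ℝ (Fin d)) :
    HasDerivAt (heatKernel d · y)
      (heatKernel d s y * (‖y‖ ^ 2 / (4 * s ^ 2) - d / (2 * s))) s := by
  have hpow : HasDerivAt (fun u : ℝ => (4 * π * u) ^ (-(d : ℝ) / 2))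
      (4 * π * (-(d : ℝ) / 2) * (4 * π * s) ^ (-(d : ℝ) / 2 - 1)) s := by
    simpa [mul_comm] using ((hasDerivAt_id s).const_mul (4 * π)).rpow_const
      (p := -(d : ℝ) / 2) (Or.inl (by positivity))
  have hexp : HasDerivAt (fun u : ℝ => exp (-(‖y‖ ^ 2) / (4 * u)))
      (exp (-(‖y‖ ^ 2) / (4 * s)) * (‖y‖ ^ 2 / (4 * s ^ 2))) s := by
    convert ((hasDerivAt_inv hs.ne').const_mul (-(‖y‖ ^ 2) / 4)).exp using 1
    · ext u; ring_nf
    · ring_nf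
  refine (hpow.mul hexp).congr_deriv ?_
  rw [heatKernel, rpow_sub (by positivity), rpow_one]
  field_simp
  ring

noncomputable def heatKernelDerivBound (d : ℕ) (s : ℝ) (y : EuclideanSpace ℝ (Fin d)) : ℝ :=
  heatKernel d s y * (‖y‖ ^ 2 / (4 * s ^ 2) + d / (2 * s))

theorem heatKernelDerivBound_nonneg {s : ℝ} (hs : 0 ≤ s) (y : EuclideanSpace ℝ (Fin d)) :
    0 ≤ heatKernelDerivBound d s y :=
  mul_nonneg (heatKernel_nonneg hs y) (by positivity)

theorem measurable_heatKernelDerivBound_uncurry :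
    Measurable fun p : ℝ × EuclideanSpace ℝ (Fin d) => heatKernelDerivBound d p.1 p.2 := by
  unfold heatKernelDerivBound heatKernel; fun_prop

theorem continuousOn_heatKernelDerivBound (y : EuclideanSpace ℝ (Fin d)) :
    ContinuousOn (heatKernelDerivBound d · y) (Ioi 0) := by
  unfold heatKernelDerivBound heatKernel
  fun_prop (disch := (intro s (hs : 0 < s); positivity))

theorem abs_heatKernel_sub_le_integral_heatKernelDerivBound {t t' : ℝ} (ht : 0 < t)
    (htt' : t ≤ t') (y : EuclideanSpace ℝ (Fin d)) :
    |heatKernel d t' y - heatKernel d t y| ≤ ∫ s in t..t', heatKernelDerivBound d s y := by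
  have hpos : ∀ s ∈ uIcc t t', 0 < s := by
    intro s hs; rw [uIcc_of_le htt'] at hs; exact ht.trans_le hs.1
  have hderiv_cont : ContinuousOn
      (fun s => heatKernel d s y * (‖y‖ ^ 2 / (4 * s ^ 2) - d / (2 * s))) (uIcc t t') := by
    refine ContinuousOn.mul (fun s hs =>
      (hasDerivAt_heatKernel (hpos s hs) y).continuousAt.continuousWithinAt) ?_
    fun_prop (disch := (intro s hs; have := hpos s hs; positivity))
  rw [← intervalIntegral.integral_eq_sub_of_hasDerivAt
    (fun s hs => hasDerivAt_heatKernel (hpos s hs) y) hderiv_cont.intervalIntegrable]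
  refine (intervalIntegral.abs_integral_le_integral_abs htt').trans
    (intervalIntegral.integral_mono_on htt' hderiv_cont.abs.intervalIntegrable
      ((continuousOn_heatKernelDerivBound y).mono hpos).intervalIntegrable fun s hs => ?_)
  have hs0 : 0 < s := ht.trans_le hs.1
  have ha : 0 ≤ ‖y‖ ^ 2 / (4 * s ^ 2) := by positivity
  have hb : 0 ≤ (d : ℝ) / (2 * s) := by positivity
  rw [abs_mul, abs_of_nonneg (heatKernel_nonneg hs0.le y)]
  exact mul_le_mul_of_nonneg_left (abs_sub_le_iff.2 ⟨by linarith, by linarith⟩)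
    (heatKernel_nonneg hs0.le y)

theorem heatKernelDerivBound_mul_rpow_norm {s α : ℝ} (hα : 0 ≤ α)
    (y : EuclideanSpace ℝ (Fin d)) :
    heatKernelDerivBound d s y * ‖y‖ ^ α =
      (4 * s ^ 2)⁻¹ * (heatKernel d s y * ‖y‖ ^ (α + 2)) +
        d / (2 * s) * (heatKernel d s y * ‖y‖ ^ α) := by
  rw [heatKernelDerivBound, rpow_add' (norm_nonneg y) (by positivity), rpow_two]
  ring

theorem integrable_heatKernelDerivBound_mul_rpow_norm {s α : ℝ} (hs : 0 < s) (hα : 0 ≤ α) :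
    Integrable fun y : EuclideanSpace ℝ (Fin d) => heatKernelDerivBound d s y * ‖y‖ ^ α := by
  simp_rw [heatKernelDerivBound_mul_rpow_norm hα]
  exact ((integrable_heatKernel_mul_rpow_norm hs (by positivity)).const_mul _).add
    ((integrable_heatKernel_mul_rpow_norm hs hα).const_mul _)

theorem integral_heatKernelDerivBound_mul_rpow_norm {s α : ℝ} (hs : 0 < s) (hα : 0 ≤ α) :
    ∫ y, heatKernelDerivBound d s y * ‖y‖ ^ α =
      (heatMoment d (α + 2) / 4 + d * heatMoment d α / 2) * s ^ (α / 2 - 1) := by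
  have e₁ : s ^ ((α + 2) / 2) = s ^ (α / 2 - 1) * s ^ 2 := by
    rw [← rpow_two, ← rpow_add hs]; ring_nf
  have e₂ : s ^ (α / 2) = s ^ (α / 2 - 1) * s := by
    rw [← rpow_add_one hs.ne']; ring_nf
  simp_rw [heatKernelDerivBound_mul_rpow_norm hα]
  rw [integral_add ((integrable_heatKernel_mul_rpow_norm hs (by positivity)).const_mul _)
      ((integrable_heatKernel_mul_rpow_norm hs hα).const_mul _),
    integral_const_mul, integral_const_mul, integral_heatKernel_mul_rpow_norm hs,
    integral_heatKernel_mul_rpow_norm hs, e₁, e₂]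
  field_simp

theorem integral_abs_heatKernel_sub_mul_rpow_norm_le {t t' α : ℝ} (ht : 0 < t) (htt' : t ≤ t')
    (hα : 0 ≤ α) :
    ∫ y, |heatKernel d t' y - heatKernel d t y| * ‖y‖ ^ α ≤
      (heatMoment d (α + 2) / 4 + d * heatMoment d α / 2) * ∫ s in t..t', s ^ (α / 2 - 1) := by
  set P : ℝ → EuclideanSpace ℝ (Fin d) → ℝ := fun s y => heatKernelDerivBound d s y * ‖y‖ ^ α
  set c := heatMoment d (α + 2) / 4 + d * heatMoment d α / 2
  have hpos : ∀ᵐ s ∂volume.restrict (uIoc t t'), 0 < s := by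
    rw [uIoc_of_le htt']
    filter_upwards [ae_restrict_mem measurableSet_Ioc] with s hs using ht.trans hs.1
  have hP_int : Integrable (Function.uncurry P) ((volume.restrict (uIoc t t')).prod volume) := by
    refine (integrable_prod_iff ?_).2 ⟨?_, ?_⟩
    · exact (measurable_heatKernelDerivBound_uncurry.mul (by fun_prop)).aestronglyMeasurable
    · filter_upwards [hpos] with s hs using integrable_heatKernelDerivBound_mul_rpow_norm hs hα
    · have hrpow : IntegrableOn (fun s : ℝ => c * s ^ (α / 2 - 1)) (uIoc t t') := by
        rw [uIoc_of_le htt']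
        refine (intervalIntegral.intervalIntegrable_rpow (Or.inr fun h0 => ?_)).1.const_mul c
        rw [uIcc_of_le htt'] at h0
        exact (ht.trans_le h0.1).false
      refine hrpow.congr_fun_ae ?_
      filter_upwards [hpos] with s hs
      have hP0 (y : EuclideanSpace ℝ (Fin d)) : 0 ≤ P s y :=
        mul_nonneg (heatKernelDerivBound_nonneg hs.le y) (by positivity)
      simp only [Function.uncurry_apply_pair, norm_of_nonneg (hP0 _), P]
      exact (integral_heatKernelDerivBound_mul_rpow_norm hs hα).symm
  calc ∫ y, |heatKernel d t' y - heatKernel d t y| * ‖y‖ ^ α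
      ≤ ∫ y, ∫ s in t..t', P s y := by
        refine integral_mono_of_nonneg (ae_of_all _ fun y => by positivity) ?_
          (ae_of_all _ fun y => ?_)
        · refine hP_int.integral_prod_right.congr (ae_of_all _ fun y => ?_)
          simp [intervalIntegral.integral_of_le htt', uIoc_of_le htt']
        · simp only [P]
          rw [intervalIntegral.integral_mul_const]
          gcongr
          exact abs_heatKernel_sub_le_integral_heatKernelDerivBound ht htt' y
    _ = ∫ s in t..t', ∫ y, P s y := (intervalIntegral_integral_swap hP_int).symm
    _ = ∫ s in t..t', c * s ^ (α / 2 - 1) := by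
        refine intervalIntegral.integral_congr fun s hs => ?_
        rw [uIcc_of_le htt'] at hs
        exact integral_heatKernelDerivBound_mul_rpow_norm (ht.trans_le hs.1) hα
    _ = c * ∫ s in t..t', s ^ (α / 2 - 1) := intervalIntegral.integral_const_mul _ _

theorem exists_integral_abs_heatKernel_add_sub_mul_rpow_norm_le {α : ℝ} (hα : 0 < α)
    (hα1 : α ≤ 1) :
    ∃ C > 0, ∀ t h : ℝ, 0 < t → 0 ≤ h →
      ∫ y : EuclideanSpace ℝ (Fin d), |heatKernel d (t + h) y - heatKernel d t y| * ‖y‖ ^ α ≤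
        C * t ^ (-α / 2) * h ^ α := by
  set c := heatMoment d (α + 2) / 4 + d * heatMoment d α / 2
  have hc : 0 ≤ c := by
    have := heatMoment_nonneg d (α + 2); have := heatMoment_nonneg d α; positivity
  refine ⟨c * α⁻¹ + 1, by positivity, fun t h ht hh => ?_⟩
  have hX : 0 ≤ t ^ (-α / 2) * h ^ α := by positivity
  calc _ ≤ c * ∫ s in t..t + h, s ^ (α / 2 - 1) :=
        integral_abs_heatKernel_sub_mul_rpow_norm_le ht (by linarith) hα.le
    _ ≤ c * (α⁻¹ * t ^ (-α / 2) * h ^ α) := by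
        gcongr; exact integral_rpow_div_two_sub_one_le hα hα1 ht hh
    _ ≤ (c * α⁻¹ + 1) * t ^ (-α / 2) * h ^ α := by nlinarith

end HeatKernel

/-- temporal Hölder continuity of the heat semigroup on `C^α` data:
`‖e^((t+h)Δ)f − e^(tΔ)f‖_(L^∞) ≲ [f]_(C^α) t^(−α/2) h^α`. -/
theorem stmt15 (d : ℕ) (hd : 1 ≤ d) (α : ℝ) (hα : 0 < α) (hα1 : α < 1) :
    ∃ C : ℝ, 0 < C ∧
      ∀ m : ℕ, 1 ≤ m →
      ∀ f : (EuclideanSpace ℝ (Fin d)) → EuclideanSpace ℝ (Fin m),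
        Continuous f → (∃ B : ℝ, ∀ x, ‖f x‖ ≤ B) →
        ∀ M : ℝ, (∀ x y, ‖f x - f y‖ ≤ M * ‖x - y‖ ^ α) →
        ∀ t h : ℝ, 0 < t → 0 < h → ∀ x : (EuclideanSpace ℝ (Fin d)),
          ‖(∫ y, heatKernel d (t + h) y • f (x - y)) - ∫ y, heatKernel d t y • f (x - y)‖ ≤
            C * M * t ^ (-α / 2) * h ^ α := by
  obtain ⟨C, hC, hkernel⟩ :=
    exists_integral_abs_heatKernel_add_sub_mul_rpow_norm_le (d := d) hα hα1.le
  refine ⟨C, hC, fun m _ f hf ⟨B, hB⟩ M hM t h ht hh x => ?_⟩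
  have : NeZero d := ⟨by omega⟩
  have hM0 : 0 ≤ M := nonneg_of_forall_norm_sub_le_mul_rpow hM
  have hth : 0 < t + h := by linarith
  have hconv {s : ℝ} (hs : 0 < s) : Integrable fun y => heatKernel d s y • f (x - y) :=
    (integrable_heatKernel hs).smul_bdd B (by fun_prop) (ae_of_all _ fun y => hB _)
  calc _ ≤ ∫ y, |heatKernel d (t + h) y - heatKernel d t y| * (M * ‖y‖ ^ α) :=
        norm_integral_smul_sub_integral_smul_le (f x) (integrable_heatKernel hth)
          (integrable_heatKernel ht) (by rw [integral_heatKernel hth, integral_heatKernel ht])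
          (hconv hth) (hconv ht) (fun y => by simpa using hM (x - y) x)
          (by simpa only [mul_left_comm] using
            (integrable_abs_heatKernel_sub_mul_rpow_norm ht hth hα.le).const_mul M)
    _ = M * ∫ y, |heatKernel d (t + h) y - heatKernel d t y| * ‖y‖ ^ α := by
        rw [← integral_const_mul]; simp only [mul_left_comm]
    _ ≤ M * (C * t ^ (-α / 2) * h ^ α) := by gcongr; exact hkernel t h ht hh.le
    _ = C * M * t ^ (-α / 2) * h ^ α := by ring
end

section
/- Let f : ℝ → ℝ be given by f(x) = (9 cos x − cos(3x))/8. Then for every x₀ ∈ ℝ such that |f(x₀)| = sup_{x ∈ ℝ} |f(x)|, one has f″(x₀) = 0. -/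
open MeasureTheory Set
open scoped ENNReal

lemma aux_deriv1 : deriv (fun x : ℝ => (9 * Real.cos x - Real.cos (3 * x)) / 8)
    = fun x : ℝ => (-9 * Real.sin x + 3 * Real.sin (3 * x)) / 8 := by
  funext x
  have h3 : HasDerivAt (fun x : ℝ => 3 * x) 3 x := by
    simpa using (hasDerivAt_id x).const_mul 3
  have h1 : HasDerivAt (fun x : ℝ => Real.cos (3 * x)) (-Real.sin (3 * x) * 3) x :=
    (Real.hasDerivAt_cos (3 * x)).comp x h3
  have h2 : HasDerivAt (fun x : ℝ => (9 * Real.cos x - Real.cos (3 * x)) / 8)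
      ((9 * -Real.sin x - -Real.sin (3 * x) * 3) / 8) x :=
    (((Real.hasDerivAt_cos x).const_mul 9).sub h1).div_const 8
  have := h2.deriv
  rw [this]; ring

lemma aux_deriv2 (x : ℝ) :
    deriv (fun x : ℝ => (-9 * Real.sin x + 3 * Real.sin (3 * x)) / 8) x
      = (-9 * Real.cos x + 9 * Real.cos (3 * x)) / 8 := by
  have h3 : HasDerivAt (fun x : ℝ => 3 * x) 3 x := by
    simpa using (hasDerivAt_id x).const_mul 3
  have h1 : HasDerivAt (fun x : ℝ => Real.sin (3 * x)) (Real.cos (3 * x) * 3) x :=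
    (Real.hasDerivAt_sin (3 * x)).comp x h3
  have h2 : HasDerivAt (fun x : ℝ => (-9 * Real.sin x + 3 * Real.sin (3 * x)) / 8)
      ((-9 * Real.cos x + 3 * (Real.cos (3 * x) * 3)) / 8) x :=
    (((Real.hasDerivAt_sin x).const_mul (-9)).add ((h1).const_mul 3)).div_const 8
  rw [h2.deriv]; ring

/-- for `f(x) = (9 cos x − cos 3x)/8`, the second derivative vanishes at any
point where `|f|` attains its supremum. -/
theorem stmt18 :
    ∀ x₀ : ℝ,
      (∀ x : ℝ, |(9 * Real.cos x - Real.cos (3 * x)) / 8| ≤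
        |(9 * Real.cos x₀ - Real.cos (3 * x₀)) / 8|) →
      deriv (deriv (fun x : ℝ => (9 * Real.cos x - Real.cos (3 * x)) / 8)) x₀ = 0 := by
  intro x₀ h
  rw [aux_deriv1, aux_deriv2]
  set c := Real.cos x₀ with hc
  have h3 : Real.cos (3 * x₀) = 4 * c ^ 3 - 3 * c := Real.cos_three_mul x₀
  have h0 := h 0
  have hc1 : |c| ≤ 1 := Real.abs_cos_le_one x₀
  rw [h3] at h0 ⊢
  norm_num at h0
  -- h0 : 1 ≤ |(9c - (4c³-3c))/8| = |(12c-4c³)/8|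
  have hcsq : c ^ 2 = 1 := by
    rcases abs_le.mp hc1 with ⟨hl, hr⟩
    rcases abs_cases ((9 * c - (4 * c ^ 3 - 3 * c)) / 8) with ⟨he, _⟩ | ⟨he, _⟩ <;>
      nlinarith [sq_nonneg (c - 1), sq_nonneg (c + 1), sq_nonneg c]
  have hc3 : c ^ 3 = c := by linear_combination c * hcsq
  linear_combination (9/2 : ℝ) * hc3
end
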